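/- For every n ≥ 1 and all α, β, k, i_1, ..., i_n ∈ I, the commutator of a transition number operator with a Y-operator satisfies [N_{αβ}, Y_{k, i_1, ..., i_n}] = − Σ_{l=1}^{n} δ_{α, i_l} Y_{k, i_1, ..., i_{l−1}, β, i_{l+1}, ..., i_n} − δ_{α, k} Y_{β, i_1, ..., i_n}, where the l-th summand replaces the index i_l by β. -/

import Mathlib

/-- The Y-operators `Y_{k, i₁, …, iₙ}`, defined recursively by
`Y_{k,i} = b_k b_i − q b_i b_k` and
`Y_{k, i₁, …, i_{n+1}} = Y_{k, i₁, …, iₙ} b_{i_{n+1}} − q^{n+1} b_{i_{n+1}} Y_{k, i₁, …, iₙ}`.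
The index tuple `(i₁, …, iₙ)` is stored as the list `[iₙ, …, i₁]` (latest index first),
so that the recursion is structural. -/
def Yop {A : Type*} [Ring A] [Algebra ℝ A] {I : Type*}
    (q : ℝ) (b : I → A) (k : I) : List I → A
  | [] => 0
  | [i] => b k * b i - q • (b i * b k)
  | i :: j :: L =>
      Yop q b k (j :: L) * b i - q ^ (L.length + 2) • (b i * Yop q b k (j :: L))

section
variable {A : Type*} [Ring A] [Algebra ℝ A]

lemma comm_expand (n Y x : A) (c : ℝ) :
    n * (Y * x - c • (x * Y)) - (Y * x - c • (x * Y)) * n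
      = (n * Y - Y * n) * x + Y * (n * x - x * n)
        - c • ((n * x - x * n) * Y + x * (n * Y - Y * n)) := by
  simp only [smul_sub, smul_add, mul_sub, sub_mul, add_mul, mul_add,
    mul_smul_comm, smul_mul_assoc, mul_assoc]
  abel

lemma ite_comb (c : Prop) [Decidable c] (X bi : A) (s : ℝ) :
    (if c then X * bi - s • (bi * X) else 0)
      = (if c then X else 0) * bi - s • (bi * (if c then X else 0)) := by
  split_ifs <;> simp

lemma Yop_cons {I : Type*} (q : ℝ) (b : I → A) (k i : I) (T : List I) (hT : T ≠ []) :
    Yop q b k (i :: T) = Yop q b k T * b i - q ^ (T.length + 1) • (b i * Yop q b k T) := by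
  cases T with
  | nil => exact absurd rfl hT
  | cons j M => simp [Yop]

end

/-- For every n ≥ 1 and all α, β, k, i₁, …, iₙ ∈ I,
`[N_{αβ}, Y_{k, i₁, …, iₙ}]
  = − Σ_{l=1}^{n} δ_{α, i_l} Y_{k, i₁, …, β, …, iₙ} − δ_{α, k} Y_{β, i₁, …, iₙ}`,
where the l-th summand replaces the index `i_l` by `β`. -/
theorem quon_comm_N_Y
    {A : Type*} [Ring A] [Algebra ℝ A] {I : Type*} [DecidableEq I]
    (q : ℝ) (b bd : I → A) (N : I → I → A)
    (hNbd : ∀ α β μ : I, N α β * bd μ - bd μ * N α β = if β = μ then bd α else 0)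
    (hNb : ∀ α β μ : I, N α β * b μ - b μ * N α β = -(if α = μ then b β else 0))
    (α β k : I) (L : List I) (hL : L ≠ []) :
    N α β * Yop q b k L - Yop q b k L * N α β =
      -(∑ l : Fin L.length, if α = L.get l then Yop q b k (L.set l β) else 0)
        - (if α = k then Yop q b β L else 0) := by
  induction L with
  | nil => exact absurd rfl hL
  | cons i T ih =>
    cases T with
    | nil =>
      rw [show Yop q b k [i] = b k * b i - q • (b i * b k) from rfl,
        comm_expand (N α β) (b k) (b i) q, hNb, hNb]
      simp only [List.length_cons, List.length_nil, Fin.sum_univ_succ, Fin.sum_univ_zero, add_zero,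
        Fin.val_zero, Fin.isValue, List.get_cons_zero, List.set_cons_zero]
      simp only [
        show Yop q b k [β] = b k * b β - q • (b β * b k) from rfl,
        show Yop q b β [i] = b β * b i - q • (b i * b β) from rfl]
      split_ifs <;>
        · simp only [mul_sub, sub_mul, neg_mul, mul_neg, smul_sub, smul_add,
            smul_neg, mul_add, add_mul, mul_smul_comm, smul_mul_assoc, mul_assoc,
            zero_mul, mul_zero, neg_zero, smul_zero, add_zero, zero_add, sub_zero, zero_sub,
            neg_neg, neg_add, neg_sub, sub_eq_add_neg]
          try module
    | cons j M =>
      have hTne : (j :: M : List I) ≠ [] := by simp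
      have ihT := ih hTne
      rw [Yop_cons q b k i (j :: M) hTne, comm_expand, hNb, ihT]
      rw [show (∑ l : Fin (i :: j :: M).length,
            if α = (i :: j :: M).get l then Yop q b k ((i :: j :: M).set l β) else 0)
          = (if α = i then Yop q b k (β :: j :: M) else 0)
            + ∑ l : Fin (j :: M).length,
                if α = (j :: M).get l then Yop q b k (i :: (j :: M).set l β) else 0 from by
        simp only [List.length_cons]
        rw [Fin.sum_univ_succ]
        simp [List.get, List.set]
        exact if_congr Iff.rfl rfl rfl]
      have hset : ∀ l : Fin (j :: M).length,
          Yop q b k (i :: (j :: M).set l β)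
            = Yop q b k ((j :: M).set l β) * b i
              - q ^ ((j :: M).length + 1) • (b i * Yop q b k ((j :: M).set l β)) := by
        intro l
        rw [Yop_cons q b k i _ (by
          apply List.ne_nil_of_length_pos
          simp), List.length_set]
      simp only [hset, ite_comb]
      rw [Finset.sum_sub_distrib, ← Finset.sum_mul, ← Finset.smul_sum, ← Finset.mul_sum]
      rw [Yop_cons q b k β (j :: M) hTne, Yop_cons q b β i (j :: M) hTne]
      set S := ∑ l : Fin (j :: M).length,
          if α = (j :: M).get l then Yop q b k ((j :: M).set l β) else 0 with hS
      set Y := Yop q b k (j :: M) with hY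
      set Z := Yop q b β (j :: M) with hZ
      split_ifs <;>
        · simp only [mul_sub, sub_mul, neg_mul, mul_neg, smul_sub, smul_add, smul_neg,
            mul_add, add_mul, mul_smul_comm, smul_mul_assoc, mul_assoc,
            zero_mul, mul_zero, neg_zero, smul_zero, add_zero, zero_add, sub_zero, zero_sub,
            neg_neg, neg_add, neg_sub, sub_eq_add_neg]
          try module
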